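/- Let A be an n×n real Hurwitz matrix (all eigenvalues have negative real part), P, Q ≻ 0 with AᵀP + PA = −Q, and β > 0. Consider the feedback vector field F(x) = A x − β·x/‖x‖_P for x ≠ 0. Then V(x) = xᵀPx satisfies along trajectories V'(x) ≤ −(λ_min(Q)/λ_max(P))·V(x) − 2β·√(V(x)), and any solution starting at x₀ ≠ 0 reaches the origin in time at most (2λ_max(P)/λ_min(Q))·ln(1 + λ_min(Q)‖x₀‖_P/(2λ_max(P)β)). -/

import Mathlib

open Matrix

private lemma quad_eq' {n : ℕ} (M : Matrix (Fin n) (Fin n) ℝ) (hM : M.IsHermitian) (v : Fin n → ℝ) :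
    v ⬝ᵥ M *ᵥ v = ∑ i, hM.eigenvalues i *
      (((hM.eigenvectorUnitary : Matrix (Fin n) (Fin n) ℝ)ᵀ *ᵥ v) i)^2 := by
  set U : Matrix (Fin n) (Fin n) ℝ := (hM.eigenvectorUnitary : Matrix (Fin n) (Fin n) ℝ) with hU
  have h := hM.spectral_theorem
  have hstar : star U = Uᵀ := by
    rw [Matrix.star_eq_conjTranspose, Matrix.conjTranspose_eq_transpose_of_trivial]
  set y := Uᵀ *ᵥ v with hy
  calc v ⬝ᵥ M *ᵥ v = v ⬝ᵥ (U * (diagonal (RCLike.ofReal ∘ hM.eigenvalues)) * Uᵀ) *ᵥ v := by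
        rw [← hstar]
        conv_lhs => rw [h]
        rfl
    _ = y ⬝ᵥ diagonal (hM.eigenvalues) *ᵥ y := by
        rw [← mulVec_mulVec, ← mulVec_mulVec, dotProduct_mulVec, ← mulVec_transpose]
        rfl
    _ = ∑ i, hM.eigenvalues i * (y i)^2 := by
        simp [dotProduct, mulVec_diagonal]
        exact Finset.sum_congr rfl fun i _ => by ring

private lemma norm_eq' {n : ℕ} (M : Matrix (Fin n) (Fin n) ℝ) (hU : M ∈ unitaryGroup (Fin n) ℝ)
    (v : Fin n → ℝ) : (Mᵀ *ᵥ v) ⬝ᵥ (Mᵀ *ᵥ v) = v ⬝ᵥ v := by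
  rw [dotProduct_mulVec, ← mulVec_transpose, transpose_transpose, mulVec_mulVec]
  have h1 : M * Mᵀ = 1 := by
    have := (mem_unitaryGroup_iff.mp hU)
    rwa [Matrix.star_eq_conjTranspose, Matrix.conjTranspose_eq_transpose_of_trivial] at this
  rw [h1, one_mulVec]

private lemma rayleigh_lower {n : ℕ} [Nonempty (Fin n)] (M : Matrix (Fin n) (Fin n) ℝ)
    (hM : M.IsHermitian) (v : Fin n → ℝ) :
    (⨅ i, hM.eigenvalues i) * (v ⬝ᵥ v) ≤ v ⬝ᵥ M *ᵥ v := by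
  rw [quad_eq' M hM v, ← norm_eq' _ (hM.eigenvectorUnitary).2 v]
  set y := ((hM.eigenvectorUnitary : Matrix (Fin n) (Fin n) ℝ)ᵀ *ᵥ v)
  have : y ⬝ᵥ y = ∑ i, (y i)^2 := by
    simp [dotProduct, pow_two]
  rw [this, Finset.mul_sum]
  refine Finset.sum_le_sum fun i _ => ?_
  exact mul_le_mul_of_nonneg_right (ciInf_le (Set.Finite.bddBelow (Set.finite_range _)) i) (sq_nonneg _)

private lemma rayleigh_upper {n : ℕ} [Nonempty (Fin n)] (M : Matrix (Fin n) (Fin n) ℝ)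
    (hM : M.IsHermitian) (v : Fin n → ℝ) :
    v ⬝ᵥ M *ᵥ v ≤ (⨆ i, hM.eigenvalues i) * (v ⬝ᵥ v) := by
  rw [quad_eq' M hM v, ← norm_eq' _ (hM.eigenvectorUnitary).2 v]
  set y := ((hM.eigenvectorUnitary : Matrix (Fin n) (Fin n) ℝ)ᵀ *ᵥ v)
  have : y ⬝ᵥ y = ∑ i, (y i)^2 := by
    simp [dotProduct, pow_two]
  rw [this, Finset.mul_sum]
  refine Finset.sum_le_sum fun i _ => ?_
  exact mul_le_mul_of_nonneg_right (le_ciSup (Set.Finite.bddAbove (Set.finite_range _)) i) (sq_nonneg _)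

private lemma quad_deriv {n : ℕ} (P : Matrix (Fin n) (Fin n) ℝ) (x : ℝ → (Fin n → ℝ))
    (x' : Fin n → ℝ) (t : ℝ) (h : HasDerivAt x x' t) :
    HasDerivAt (fun s => x s ⬝ᵥ P *ᵥ x s) (x' ⬝ᵥ P *ᵥ x t + x t ⬝ᵥ P *ᵥ x') t := by
  have hi : ∀ i, HasDerivAt (fun s => x s i) (x' i) t := hasDerivAt_pi.mp h
  have h1 : ∀ i, HasDerivAt (fun s => ∑ j, P i j * x s j) (∑ j, P i j * x' j) t :=
    fun i => HasDerivAt.fun_sum fun j _ => (hi j).const_mul _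
  have h2 : HasDerivAt (fun s => ∑ i, x s i * ∑ j, P i j * x s j)
      (∑ i, (x' i * (∑ j, P i j * x t j) + x t i * (∑ j, P i j * x' j))) t :=
    HasDerivAt.fun_sum fun i _ => (hi i).mul (h1 i)
  have e1 : (fun s => x s ⬝ᵥ P *ᵥ x s) = fun s => ∑ i, x s i * ∑ j, P i j * x s j := by
    funext s; simp [dotProduct, mulVec]
  have e2 : x' ⬝ᵥ P *ᵥ x t + x t ⬝ᵥ P *ᵥ x' =
      ∑ i, (x' i * (∑ j, P i j * x t j) + x t i * (∑ j, P i j * x' j)) := by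
    simp [dotProduct, mulVec, Finset.sum_add_distrib]
  rw [e1, e2]; exact h2

theorem finite_time_convergence (n : ℕ)
    (A P Q : Matrix (Fin n) (Fin n) ℝ)
    (hHurwitz : ∀ μ ∈ spectrum ℂ (A.map (Complex.ofReal)), μ.re < 0)
    (hP : P.PosDef) (hQ : Q.PosDef)
    (hLyap : Aᵀ * P + P * A = -Q)
    (β : ℝ) (hβ : 0 < β)
    (x : ℝ → (Fin n → ℝ)) (x₀ : Fin n → ℝ) (hx0 : x 0 = x₀) (hx₀ : x₀ ≠ 0)
    (hxc : Continuous x)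
    (hODE : ∀ t ≥ 0, x t ≠ 0 → HasDerivAt x
      (A.mulVec (x t) - (β / Real.sqrt (dotProduct (x t) (P.mulVec (x t)))) • x t) t) :
    (∀ t ≥ 0, x t ≠ 0 →
      deriv (fun s => dotProduct (x s) (P.mulVec (x s))) t ≤
        -((⨅ i, hQ.1.eigenvalues i) / (⨆ i, hP.1.eigenvalues i)) *
            dotProduct (x t) (P.mulVec (x t)) -
          2 * β * Real.sqrt (dotProduct (x t) (P.mulVec (x t)))) ∧
    ∃ T, 0 ≤ T ∧
      T ≤ (2 * (⨆ i, hP.1.eigenvalues i) / (⨅ i, hQ.1.eigenvalues i)) *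
          Real.log (1 + (⨅ i, hQ.1.eigenvalues i) * Real.sqrt (dotProduct x₀ (P.mulVec x₀)) /
            (2 * (⨆ i, hP.1.eigenvalues i) * β)) ∧
      x T = 0 := by
  rcases Nat.eq_zero_or_pos n with hn | hn
  · subst hn
    exact absurd (Subsingleton.elim x₀ 0) hx₀
  have : Nonempty (Fin n) := ⟨⟨0, hn⟩⟩
  set lm := ⨅ i, hQ.1.eigenvalues i with hlm
  set lM := ⨆ i, hP.1.eigenvalues i with hlM
  have hlmpos : 0 < lm := by
    obtain ⟨i, hi⟩ := exists_eq_ciInf_of_finite (f := hQ.1.eigenvalues)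
    rw [hlm, ← hi]; exact hQ.eigenvalues_pos i
  have hlMpos : 0 < lM := by
    refine lt_of_lt_of_le (hP.eigenvalues_pos (Classical.arbitrary (Fin n))) ?_
    exact le_ciSup (Set.Finite.bddAbove (Set.finite_range _)) _
  set V : ℝ → ℝ := fun s => x s ⬝ᵥ P *ᵥ x s with hV
  -- positivity of V at nonzero points
  have hVpos : ∀ v : Fin n → ℝ, v ≠ 0 → 0 < v ⬝ᵥ P *ᵥ v := by
    intro v hv
    have := hP.dotProduct_mulVec_pos hv
    simpa using this
  -- derivative formula
  have hderiv : ∀ t ≥ (0:ℝ), x t ≠ 0 → HasDerivAt V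
      (-(x t ⬝ᵥ Q *ᵥ x t) - 2 * β * Real.sqrt (V t)) t := by
    intro t ht hne
    have hx' := hODE t ht hne
    have hd := quad_deriv P x _ t hx'
    set c : ℝ := β / Real.sqrt (V t) with hc
    set v := x t with hxt
    have hVt : 0 < V t := hVpos v hne
    have e1 : (A *ᵥ v - c • v) ⬝ᵥ P *ᵥ v + v ⬝ᵥ P *ᵥ (A *ᵥ v - c • v)
        = -(v ⬝ᵥ Q *ᵥ v) - 2 * β * Real.sqrt (V t) := by
      have h1 : (A *ᵥ v) ⬝ᵥ P *ᵥ v = v ⬝ᵥ (Aᵀ * P) *ᵥ v := by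
        rw [dotProduct_mulVec (A *ᵥ v), Matrix.vecMul_mulVec, ← dotProduct_mulVec]
      have h2 : v ⬝ᵥ P *ᵥ (A *ᵥ v) = v ⬝ᵥ (P * A) *ᵥ v := by rw [mulVec_mulVec]
      have h3 : v ⬝ᵥ (Aᵀ * P) *ᵥ v + v ⬝ᵥ (P * A) *ᵥ v = -(v ⬝ᵥ Q *ᵥ v) := by
        rw [← dotProduct_add, ← Matrix.add_mulVec, hLyap, Matrix.neg_mulVec, dotProduct_neg]
      have h4 : c * (v ⬝ᵥ P *ᵥ v) = β * Real.sqrt (V t) := by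
        rw [hc]
        have : V t = v ⬝ᵥ P *ᵥ v := rfl
        rw [← this, div_mul_eq_mul_div, mul_div_assoc, Real.div_sqrt]
      have e2 : (A *ᵥ v - c • v) ⬝ᵥ P *ᵥ v = (A *ᵥ v) ⬝ᵥ P *ᵥ v - c * (v ⬝ᵥ P *ᵥ v) := by
        rw [sub_dotProduct, smul_dotProduct, smul_eq_mul]
      have e3 : v ⬝ᵥ P *ᵥ (A *ᵥ v - c • v) = v ⬝ᵥ P *ᵥ (A *ᵥ v) - c * (v ⬝ᵥ P *ᵥ v) := by
        rw [Matrix.mulVec_sub, dotProduct_sub, Matrix.mulVec_smul, dotProduct_smul, smul_eq_mul]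
      rw [e2, e3, h1, h2]
      rw [h4]
      linarith [h3]
    rw [← e1]
    exact hd
  constructor
  · -- Part 1
    intro t ht hne
    have hd := hderiv t ht hne
    rw [hd.deriv]
    have hq := rayleigh_lower Q hQ.1 (x t)
    have hp := rayleigh_upper P hP.1 (x t)
    have hVt : V t = x t ⬝ᵥ P *ᵥ x t := rfl
    have h1 : (lm / lM) * (x t ⬝ᵥ P *ᵥ x t) ≤ lm * (x t ⬝ᵥ x t) := by
      calc (lm/lM) * (x t ⬝ᵥ P *ᵥ x t) ≤ (lm/lM)*(lM * (x t ⬝ᵥ x t)) := by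
            apply mul_le_mul_of_nonneg_left hp (by positivity)
        _ = lm * (x t ⬝ᵥ x t) := by field_simp
    simp only [hVt]
    linarith
  · -- Part 2
    set α := lm / (2*lM) with hα
    have hαpos : 0 < α := by positivity
    set W0 := Real.sqrt (x₀ ⬝ᵥ P *ᵥ x₀) with hW0
    have hW0pos : 0 < W0 := Real.sqrt_pos.mpr (hVpos x₀ hx₀)
    set B := (1/α) * Real.log (1 + α * W0 / β) with hB
    have hBeq : (2 * lM / lm) * Real.log (1 + lm * W0 / (2 * lM * β)) = B := by
      rw [hB, hα]
      congr 1
      · field_simp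
      · congr 2
        rw [div_mul_eq_mul_div, div_div]
    have hBpos : 0 ≤ B := by
      apply mul_nonneg (by positivity)
      apply Real.log_nonneg
      have : 0 ≤ α * W0 / β := by positivity
      linarith
    have key : ∃ s, 0 ≤ s ∧ s ≤ B ∧ x s = 0 := by
      by_contra hcon
      push_neg at hcon
      set g : ℝ → ℝ := fun s => Real.exp (α*s) * (Real.sqrt (V s) + β/α) with hg
      have hVc : Continuous V := by
        simp only [hV, dotProduct, mulVec]
        exact continuous_finset_sum _ fun i _ => ((continuous_apply i).comp hxc).mul
          (continuous_finset_sum _ fun j _ => Continuous.mul continuous_const ((continuous_apply j).comp hxc))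
      have hgc : Continuous g :=
        (Real.continuous_exp.comp (continuous_const.mul continuous_id)).mul
          ((Real.continuous_sqrt.comp hVc).add continuous_const)
      have hgd : ∀ s ∈ Set.Ioo (0:ℝ) B, HasDerivAt g
          ((Real.exp (α*s)*α) * (Real.sqrt (V s)+β/α) +
            Real.exp (α*s) * ((-(x s ⬝ᵥ Q *ᵥ x s) - 2*β*Real.sqrt (V s))/(2*Real.sqrt (V s)))) s := by
        intro s hs
        have hxs : x s ≠ 0 := hcon s hs.1.le hs.2.le
        have hVs : 0 < V s := hVpos (x s) hxs
        have hd := hderiv s hs.1.le hxs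
        have hsq := hd.sqrt (ne_of_gt hVs)
        have hexp : HasDerivAt (fun u => Real.exp (α*u)) (Real.exp (α*s)*α) s := by
          have := (Real.hasDerivAt_exp (α*s)).comp s ((hasDerivAt_id s).const_mul α)
          simpa [Function.comp_def] using this
        exact hexp.mul (hsq.add_const (β/α))
      have hmono : AntitoneOn g (Set.Icc 0 B) := by
        apply antitoneOn_of_deriv_nonpos (convex_Icc 0 B) hgc.continuousOn
        · intro s hs
          rw [interior_Icc] at hs
          exact ((hgd s hs).differentiableAt).differentiableWithinAt
        · intro s hs
          rw [interior_Icc] at hs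
          rw [(hgd s hs).deriv]
          have hxs : x s ≠ 0 := hcon s hs.1.le hs.2.le
          have hVs : 0 < V s := hVpos (x s) hxs
          have hsqpos : 0 < Real.sqrt (V s) := Real.sqrt_pos.mpr hVs
          have hs2 : Real.sqrt (V s) * Real.sqrt (V s) = V s := Real.mul_self_sqrt hVs.le
          have hkey : 2*α*(V s) ≤ x s ⬝ᵥ Q *ᵥ x s := by
            have hq := rayleigh_lower Q hQ.1 (x s)
            have hp := rayleigh_upper P hP.1 (x s)
            have h2α : 2*α = lm/lM := by rw [hα]; field_simp
            have hVs' : V s = x s ⬝ᵥ P *ᵥ x s := rfl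
            calc 2*α*(V s) = (lm/lM)*(x s ⬝ᵥ P *ᵥ x s) := by rw [h2α, hVs']
              _ ≤ (lm/lM)*(lM * (x s ⬝ᵥ x s)) := by
                  apply mul_le_mul_of_nonneg_left hp (by positivity)
              _ = lm * (x s ⬝ᵥ x s) := by field_simp
              _ ≤ x s ⬝ᵥ Q *ᵥ x s := hq
          have hfac : α * (Real.sqrt (V s)+β/α) +
              (-(x s ⬝ᵥ Q *ᵥ x s) - 2*β*Real.sqrt (V s))/(2*Real.sqrt (V s)) ≤ 0 := by
            have he : α * (Real.sqrt (V s)+β/α) = α * Real.sqrt (V s) + β := by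
              field_simp
            have hdle : (-(x s ⬝ᵥ Q *ᵥ x s) - 2*β*Real.sqrt (V s))/(2*Real.sqrt (V s))
                ≤ -(α * Real.sqrt (V s) + β) := by
              rw [div_le_iff₀ (by positivity)]
              nlinarith [hkey, hs2]
            rw [he]
            linarith
          calc (Real.exp (α*s)*α) * (Real.sqrt (V s)+β/α) +
              Real.exp (α*s) * ((-(x s ⬝ᵥ Q *ᵥ x s) - 2*β*Real.sqrt (V s))/(2*Real.sqrt (V s)))
              = Real.exp (α*s) * (α * (Real.sqrt (V s)+β/α) +
                (-(x s ⬝ᵥ Q *ᵥ x s) - 2*β*Real.sqrt (V s))/(2*Real.sqrt (V s))) := by ring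
            _ ≤ 0 := mul_nonpos_of_nonneg_of_nonpos (Real.exp_pos _).le hfac
      have h1 : g B ≤ g 0 := hmono ⟨le_rfl, hBpos⟩ ⟨hBpos, le_rfl⟩ hBpos
      have hV0 : V 0 = x₀ ⬝ᵥ P *ᵥ x₀ := by rw [hV]; simp [hx0]
      have hg0 : g 0 = W0 + β/α := by
        simp only [hg]
        rw [mul_zero, Real.exp_zero, one_mul, hV0, ← hW0]
      have harg : (0:ℝ) < 1 + α*W0/β := by positivity
      have hexpB : Real.exp (α*B) = 1 + α*W0/β := by
        rw [hB, show α * (1/α * Real.log (1+α*W0/β)) = Real.log (1+α*W0/β) from by field_simp]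
        exact Real.exp_log harg
      have hVB : 0 < Real.sqrt (V B) :=
        Real.sqrt_pos.mpr (hVpos (x B) (hcon B hBpos le_rfl))
      have hlt : W0 + β/α < g B := by
        simp only [hg]
        have h2 : Real.exp (α*B)*(β/α) = W0 + β/α := by
          rw [hexpB]; field_simp; ring
        nlinarith [mul_pos (Real.exp_pos (α*B)) hVB, h2]
      rw [hg0] at h1
      linarith
    obtain ⟨T, hT0, hTB, hxT⟩ := key
    exact ⟨T, hT0, by rw [hBeq]; exact hTB, hxT⟩
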